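/- arXiv:2208.01900 — 3 statements merged into one kernel-verified Lean document; each statement's English description precedes it below -/
import Mathlib

section
/- Let G be a finite cyclic group of order n ≥ 3 and H ≠ {e} a subgroup of order h. For x ∈ (G \ H) \ {e}, the degree of x in the generalized non-coprime graph Γ_{G,H} equals ∑_{d | h, d > 1, gcd(d,|x|) > 1} φ(d). -/
/-!
An element `x ∉ H` can only be adjacent to elements of `H`, so its neighbours are the
non-identity `y ∈ H` with `gcd(|y|, |x|) ≠ 1`. Since `H` is cyclic, sorting these by their
order `d ∣ |H|` gives `φ(d)` elements for each admissible `d`.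
-/

/-- The generalized non-coprime graph of a group `G` with respect to a subgroup `H`:
vertices are the non-identity elements of `G`, and distinct vertices `a`, `b` are
adjacent iff `gcd(|a|,|b|) ≠ 1` and `a ∈ H` or `b ∈ H`. -/
def genNonCoprimeGraph (G : Type*) [Group G] (H : Subgroup G) :
    SimpleGraph {x : G // x ≠ 1} where
  Adj a b := a ≠ b ∧ Nat.gcd (orderOf (a : G)) (orderOf (b : G)) ≠ 1 ∧
    ((a : G) ∈ H ∨ (b : G) ∈ H)
  symm := by
    constructor
    intro a b h
    exact ⟨h.1.symm, by rw [Nat.gcd_comm]; exact h.2.1, h.2.2.symm⟩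
  loopless := by
    constructor
    intro a h
    exact h.1 rfl

open Finset Nat

theorem IsCyclic.card_filter_orderOf {C : Type*} [Group C] [Fintype C] [IsCyclic C]
    (P : ℕ → Prop) [DecidablePred P] :
    #{g : C | P (orderOf g)} = ∑ d ∈ (Fintype.card C).divisors with P d, φ d := by
  rw [card_eq_sum_card_fiberwise (f := orderOf) fun g hg ↦ ?_]
  · refine sum_congr rfl fun d hd ↦ ?_
    obtain ⟨⟨hdvd, -⟩, hPd⟩ := by simpa only [mem_filter, mem_divisors] using hd
    rw [filter_filter, ← IsCyclic.card_orderOf_eq_totient hdvd]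
    congr 1
    exact filter_congr fun g _ ↦ ⟨And.right, fun h ↦ ⟨h ▸ hPd, h⟩⟩
  · simp only [coe_filter, mem_univ, true_and, Set.mem_ofPred_eq] at hg
    simp only [coe_filter, mem_divisors, Set.mem_ofPred_eq]
    exact ⟨⟨orderOf_dvd_card, Fintype.card_ne_zero⟩, hg⟩

theorem genNonCoprimeGraph_adj_iff_of_notMem {G : Type*} [Group G] {H : Subgroup G}
    {x y : {g : G // g ≠ 1}} (hx : (x : G) ∉ H) :
    (genNonCoprimeGraph G H).Adj x y ↔
      (y : G) ∈ H ∧ Nat.gcd (orderOf (y : G)) (orderOf (x : G)) ≠ 1 := by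
  simp only [genNonCoprimeGraph, Nat.gcd_comm (orderOf (x : G)), hx, false_or]
  exact ⟨fun h ↦ ⟨h.2.2, h.2.1⟩, fun h ↦ ⟨fun hxy ↦ hx (hxy ▸ h.1), h.2, h.1⟩⟩

theorem ncard_neighborSet_genNonCoprimeGraph_of_notMem {G : Type*} [Group G] {H : Subgroup G}
    {x : {g : G // g ≠ 1}} (hx : (x : G) ∉ H) :
    ((genNonCoprimeGraph G H).neighborSet x).ncard =
      Nat.card {g : H // orderOf g ≠ 1 ∧ Nat.gcd (orderOf g) (orderOf (x : G)) ≠ 1} := by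
  rw [← Nat.card_coe_set_eq]
  refine Nat.card_congr
    { toFun y := ⟨⟨y.1, ((genNonCoprimeGraph_adj_iff_of_notMem hx).1 y.2).1⟩, ?_⟩
      invFun g := ⟨⟨g.1, ?_⟩, ?_⟩
      left_inv _ := rfl
      right_inv _ := rfl }
  · rw [Subgroup.orderOf_mk, Ne, orderOf_eq_one_iff]
    exact ⟨y.1.2, ((genNonCoprimeGraph_adj_iff_of_notMem hx).1 y.2).2⟩
  · rw [Ne, ← orderOf_eq_one_iff, Subgroup.orderOf_coe]
    exact g.2.1
  · exact (genNonCoprimeGraph_adj_iff_of_notMem hx).2 ⟨g.1.2, by simpa using g.2.2⟩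

theorem degree_of_notMem_eq_general {G : Type*} [Group G] [Fintype G]
    (hG : IsCyclic G)
    (H : Subgroup G)
    (x : {g : G // g ≠ 1}) (hx : (x : G) ∉ H) :
    ((genNonCoprimeGraph G H).neighborSet x).ncard =
      ∑ d ∈ (Nat.card H).divisors.filter
          (fun d => 1 < d ∧ 1 < Nat.gcd d (orderOf (x : G))), Nat.totient d := by
  classical
  have : IsCyclic H := Subgroup.isCyclic H
  rw [ncard_neighborSet_genNonCoprimeGraph_of_notMem hx, Nat.card_eq_fintype_card,
    Fintype.card_subtype,
    IsCyclic.card_filter_orderOf fun d ↦ d ≠ 1 ∧ Nat.gcd d (orderOf (x : G)) ≠ 1,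
    Nat.card_eq_fintype_card]
  refine sum_congr (filter_congr fun d hd ↦ ?_) fun _ _ ↦ rfl
  have hd_pos := pos_of_mem_divisors hd
  have hgcd_pos := Nat.gcd_pos_of_pos_left (orderOf (x : G)) hd_pos
  omega

theorem degree_of_notMem_eq {G : Type*} [Group G] [Fintype G] [DecidableEq G]
    (hG : IsCyclic G) (hn : 3 ≤ Fintype.card G)
    (H : Subgroup G) (hH : H ≠ ⊥)
    (x : {g : G // g ≠ 1}) (hx : (x : G) ∉ H) :
    ((genNonCoprimeGraph G H).neighborSet x).ncard =
      ∑ d ∈ (Nat.card H).divisors.filter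
          (fun d => 1 < d ∧ 1 < Nat.gcd d (orderOf (x : G))), Nat.totient d :=
  degree_of_notMem_eq_general hG H x hx
end

section
/- Let G be a finite cyclic group of order n ≥ 3 and H ≠ {e} a subgroup. Then the generalized non-coprime graph Γ_{G,H} is a star graph if and only if either (G is a 2-group and H ≅ Z_2) or (G = H ≅ Z_3). -/
/-!
Let `v` be the centre of the star. If `v ∉ H`, every other non-identity element lies in `H`,
and then so does `v` (write `v = (v h) h⁻¹` for some `1 ≠ h ∈ H`); hence `v ∈ H`.

If `|v| = 2`, every element of prime order `q` is adjacent to `v`, so `q = 2` and `G` is a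
`2`-group. All non-identity elements then have even order, so any `a ∈ H \ {1, v}` would make
`a` and `a v` an edge avoiding `v`; thus `H = ⟨v⟩ ≅ Z₂`.

If `|v| > 2`, then `v⁻¹ ≠ v` lies in `H` and has the order of `v`, so every vertex `w ≠ v` is
adjacent to `v⁻¹`, forcing `w = v⁻¹`. Hence `G = {1, v, v⁻¹}`, and `H = G` has order `3`.

Conversely, in a `2`-group with `|H| = 2` the generator of `H` is a star centre, and in a group
of order `3` (where all non-identity orders are `3`) so is any non-identity element.
-/

namespace SimpleGraph

variable {V : Type*}

/-- `Γ` is a star graph `K_{1,m}`, `m ≥ 1`, iff it has a star centre. -/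
structure IsStarCenter (Γ : SimpleGraph V) (v : V) : Prop where
  exists_ne : ∃ w, w ≠ v
  adj : ∀ w, w ≠ v → Γ.Adj v w
  eq_or_eq_of_adj : ∀ w w', Γ.Adj w w' → w = v ∨ w' = v

theorem isStarCenter_iff {Γ : SimpleGraph V} {v : V} :
    Γ.IsStarCenter v ↔
      (∃ w, w ≠ v) ∧ (∀ w, w ≠ v → Γ.Adj v w) ∧ ∀ w w', Γ.Adj w w' → w = v ∨ w' = v :=
  ⟨fun ⟨h₁, h₂, h₃⟩ => ⟨h₁, h₂, h₃⟩, fun ⟨h₁, h₂, h₃⟩ => ⟨h₁, h₂, h₃⟩⟩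

end SimpleGraph

theorem Subgroup.mem_of_forall_ne_mem {G : Type*} [Group G] {H : Subgroup G} (hH : H ≠ ⊥)
    {x : G} (h : ∀ g, g ≠ x → g ∈ H) : x ∈ H := by
  obtain ⟨a, haH, ha1⟩ := H.bot_or_exists_ne_one.resolve_left hH
  have hxa : x * a ∈ H := h _ (mul_ne_left.mpr ha1)
  simpa using H.mul_mem hxa (H.inv_mem haH)

theorem Nat.card_subtype_ne {α : Type*} [Finite α] (a : α) :
    Nat.card {x : α // x ≠ a} = Nat.card α - 1 := by
  classical
  have := Fintype.ofFinite α
  simp [Nat.card_eq_fintype_card, Fintype.card_subtype_compl]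

namespace genNonCoprimeGraph

variable {G : Type*} [Group G] {H : Subgroup G}

theorem adj_of_isPGroup {p : ℕ} [Fact p.Prime] (hG : IsPGroup p G) {a b : {g : G // g ≠ 1}}
    (hab : a ≠ b) (hH : (a : G) ∈ H ∨ (b : G) ∈ H) : (genNonCoprimeGraph G H).Adj a b := by
  refine ⟨hab, fun hgcd => (Fact.out : p.Prime).ne_one ?_, hH⟩
  exact Nat.dvd_one.mp (hgcd ▸ Nat.dvd_gcd (hG.dvd_orderOf a.2) (hG.dvd_orderOf b.2))

variable {v : {g : G // g ≠ 1}}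

theorem mem_of_isStarCenter (hH : H ≠ ⊥) (hv : (genNonCoprimeGraph G H).IsStarCenter v) :
    (v : G) ∈ H := by
  by_contra hvH
  refine hvH (Subgroup.mem_of_forall_ne_mem hH fun g hgv => ?_)
  by_cases hg1 : g = 1
  · exact hg1 ▸ H.one_mem
  · exact (hv.adj ⟨g, hg1⟩ (ne_of_apply_ne Subtype.val hgv)).2.2.resolve_left hvH

theorem isPGroup_of_isStarCenter [Finite G] {p : ℕ} [hp : Fact p.Prime]
    (hvp : orderOf (v : G) = p) (hv : (genNonCoprimeGraph G H).IsStarCenter v) :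
    IsPGroup p G := by
  have hprime : ∀ {q}, q.Prime → q ∣ Nat.card G → q = p := by
    intro q hq hqG
    have := Fact.mk hq
    obtain ⟨g, hg⟩ := exists_prime_orderOf_dvd_card' q hqG
    have hg1 : g ≠ 1 := by
      rintro rfl
      exact hq.ne_one (hg.symm.trans orderOf_one)
    by_cases hgv : (⟨g, hg1⟩ : {g : G // g ≠ 1}) = v
    · rw [← hg, ← hvp, ← hgv]
    · have hgcd := (hv.adj _ hgv).2.1
      rw [hvp, hg] at hgcd
      by_contra hqp
      exact hgcd ((Nat.coprime_primes hp.out hq).mpr (Ne.symm hqp))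
  exact IsPGroup.of_card (Nat.eq_prime_pow_of_unique_prime_dvd Nat.card_pos.ne' hprime)

theorem eq_zpowers_of_isStarCenter (hG : IsPGroup 2 G)
    (hv2 : orderOf (v : G) = 2) (hvH : (v : G) ∈ H)
    (hv : (genNonCoprimeGraph G H).IsStarCenter v) : H = Subgroup.zpowers (v : G) := by
  refine le_antisymm (fun a haH => ?_) (Subgroup.zpowers_le.mpr hvH)
  by_contra ha
  have ha1 : a ≠ 1 := by
    rintro rfl
    exact ha (Subgroup.one_mem _)
  have hav : a ≠ v := by
    rintro rfl
    exact ha (Subgroup.mem_zpowers _)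
  have hav1 : a * v ≠ 1 := by
    rwa [Ne, mul_eq_one_iff_eq_inv, inv_eq_self_of_orderOf_eq_two hv2]
  have hadj : (genNonCoprimeGraph G H).Adj ⟨a, ha1⟩ ⟨a * v, hav1⟩ :=
    adj_of_isPGroup hG (by simpa [Subtype.ext_iff] using v.2) (Or.inl haH)
  rcases hv.eq_or_eq_of_adj _ _ hadj with h | h
  · exact hav (congrArg Subtype.val h)
  · exact ha1 (mul_eq_right.mp (congrArg Subtype.val h))

theorem card_le_three_of_isStarCenter [Fintype G] (hv : (genNonCoprimeGraph G H).IsStarCenter v)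
    (hvH : (v : G) ∈ H) (hv3 : 2 < orderOf (v : G)) : Fintype.card G ≤ 3 := by
  classical
  have hvinv : (v : G)⁻¹ ≠ v := by
    intro h
    have : orderOf (v : G) ∣ 2 :=
      orderOf_dvd_of_pow_eq_one (by rw [pow_two, mul_eq_one_iff_eq_inv, h])
    exact absurd (Nat.le_of_dvd two_pos this) (not_le.mpr hv3)
  let v' : {g : G // g ≠ 1} := ⟨(v : G)⁻¹, inv_ne_one.mpr v.2⟩
  have hv'v : v' ≠ v := ne_of_apply_ne Subtype.val hvinv
  have hmem : ∀ g : G, g ∈ ({1, (v : G), (v : G)⁻¹} : Finset G) := by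
    intro g
    by_contra hg
    simp only [Finset.mem_insert, Finset.mem_singleton, not_or] at hg
    obtain ⟨hg1, hgv, hgv'⟩ := hg
    let w : {g : G // g ≠ 1} := ⟨g, hg1⟩
    have hwv : w ≠ v := ne_of_apply_ne Subtype.val hgv
    have hadj : (genNonCoprimeGraph G H).Adj w v' := by
      refine ⟨ne_of_apply_ne Subtype.val hgv', ?_, Or.inr (H.inv_mem hvH)⟩
      simpa only [v', orderOf_inv, Nat.gcd_comm] using (hv.adj w hwv).2.1
    rcases hv.eq_or_eq_of_adj _ _ hadj with h | h
    · exact hwv h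
    · exact hv'v h
  calc Fintype.card G = (Finset.univ : Finset G).card := Finset.card_univ.symm
    _ ≤ ({1, (v : G), (v : G)⁻¹} : Finset G).card := Finset.card_le_card fun g _ => hmem g
    _ ≤ 3 := Finset.card_le_three

theorem exists_ne_of_three_le_card [Finite G] (hcard : 3 ≤ Nat.card G)
    (v : {g : G // g ≠ 1}) : ∃ w, w ≠ v := by
  have : 1 < Nat.card {g : G // g ≠ 1} := by
    rw [Nat.card_subtype_ne]
    omega
  have := Finite.one_lt_card_iff_nontrivial.mp this
  exact exists_ne v

theorem exists_isStarCenter_of_isPGroup [Finite G] {p : ℕ} [Fact p.Prime] (hG : IsPGroup p G)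
    (hcard : 3 ≤ Nat.card G) (hH : Nat.card H = 2) :
    ∃ v, (genNonCoprimeGraph G H).IsStarCenter v := by
  obtain ⟨t, ht1, ht⟩ := (Nat.card_eq_two_iff' (1 : H)).mp hH
  let v : {g : G // g ≠ 1} := ⟨t, fun h => ht1 (Subtype.ext h)⟩
  have hmem : ∀ w : {g : G // g ≠ 1}, (w : G) ∈ H → w = v := fun w hw =>
    Subtype.ext (congrArg (fun x : H => (x : G)) (ht ⟨w, hw⟩ fun h => w.2 (congrArg Subtype.val h)))
  exact ⟨v, exists_ne_of_three_le_card hcard v,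
    fun w hw => adj_of_isPGroup hG hw.symm (Or.inl t.2),
    fun w w' h => h.2.2.imp (hmem w) (hmem w')⟩

theorem exists_isStarCenter_of_card_eq_three [Finite G] (hcard : Nat.card G = 3) :
    ∃ v, (genNonCoprimeGraph G ⊤).IsStarCenter v := by
  have hG : IsPGroup 3 G := IsPGroup.of_card (n := 1) hcard
  have hcard' : Nat.card {g : G // g ≠ 1} = 2 := by
    rw [Nat.card_subtype_ne, hcard]
  obtain ⟨v, w₀, hvw₀, huniv⟩ := Nat.card_eq_two_iff.mp hcard'
  have hother : ∀ w, w ≠ v → w = w₀ := fun w hw =>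
    (huniv ▸ Set.mem_univ w : w ∈ ({v, w₀} : Set _)).resolve_left hw
  refine ⟨v, ⟨w₀, hvw₀.symm⟩, fun w hw => adj_of_isPGroup hG hw.symm (Or.inl trivial),
    fun w w' h => ?_⟩
  by_contra! hne
  exact h.1 ((hother w hne.1).trans (hother w' hne.2).symm)

end genNonCoprimeGraph

open genNonCoprimeGraph in
theorem star_iff_general {G : Type*} [Group G] [Fintype G]
    (hn : 3 ≤ Fintype.card G)
    (H : Subgroup G) (hH : H ≠ ⊥) :
    (∃ v : {g : G // g ≠ 1}, (∃ w, w ≠ v) ∧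
        (∀ w, w ≠ v → (genNonCoprimeGraph G H).Adj v w) ∧
        (∀ w w', (genNonCoprimeGraph G H).Adj w w' → w = v ∨ w' = v)) ↔
      (IsPGroup 2 G ∧ Nat.card H = 2) ∨ (H = ⊤ ∧ Fintype.card G = 3) := by
  simp only [← SimpleGraph.isStarCenter_iff]
  constructor
  · rintro ⟨v, hv⟩
    have hvH := mem_of_isStarCenter hH hv
    by_cases hv2 : orderOf (v : G) = 2
    · have hG := isPGroup_of_isStarCenter hv2 hv
      refine Or.inl ⟨hG, ?_⟩
      rw [eq_zpowers_of_isStarCenter hG hv2 hvH hv, Nat.card_zpowers, hv2]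
    · have hv1 : orderOf (v : G) ≠ 1 := mt orderOf_eq_one_iff.mp v.2
      have hv0 := orderOf_pos (v : G)
      have hcard := (card_le_three_of_isStarCenter hv hvH (by omega)).antisymm hn
      have : Fact (Nat.card G).Prime := ⟨by rw [Nat.card_eq_fintype_card, hcard]; norm_num⟩
      exact Or.inr ⟨H.eq_bot_or_eq_top_of_prime_card.resolve_left hH, hcard⟩
  · rw [← Nat.card_eq_fintype_card] at hn ⊢
    rintro (⟨hG, hH2⟩ | ⟨rfl, hcard⟩)
    · exact exists_isStarCenter_of_isPGroup hG hn hH2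
    · exact exists_isStarCenter_of_card_eq_three hcard

theorem star_iff {G : Type*} [Group G] [Fintype G]
    (hG : IsCyclic G) (hn : 3 ≤ Fintype.card G)
    (H : Subgroup G) (hH : H ≠ ⊥) :
    (∃ v : {g : G // g ≠ 1}, (∃ w, w ≠ v) ∧
        (∀ w, w ≠ v → (genNonCoprimeGraph G H).Adj v w) ∧
        (∀ w w', (genNonCoprimeGraph G H).Adj w w' → w = v ∨ w' = v)) ↔
      (IsPGroup 2 G ∧ Nat.card H = 2) ∨ (H = ⊤ ∧ Fintype.card G = 3) :=
  star_iff_general hn H hH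
end

section
/- Let G be a finite cyclic group of order n ≥ 3 and H ≠ {e} a subgroup. Then the generalized non-coprime graph Γ_{G,H} contains exactly one cycle (is unicyclic) if and only if H = G and G ≅ Z_4. -/
/-! Every edge of the graph has an endpoint in `H \ {1}`, so for `|H| ≤ 2` it is a star and has no
cycle; a cycle also needs three non-identity vertices, so `|G| ≥ 4`. If `|G| ≥ 5`, choose `u ∈ H`
with `u ≠ u⁻¹` and `u ∉ {g, g⁻¹}` for a generator `g`: the order of `u` divides `|g| = |G|`, so
`g` and `g⁻¹` are both adjacent to `u` and `u⁻¹`, and the two triangles over the edge `u u⁻¹` are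
different cycles. Hence `|G| = 4` and `H = G`. Conversely, in a group of order 4 all non-identity
elements have even order, so `Γ_{G,G}` is a triangle. -/

namespace SimpleGraph

variable {V : Type*} {G : SimpleGraph V}

/-- A cycle is recorded by its edge set, so rotations and reversals of a closed walk count as
the same cycle. -/
def IsUnicyclic (G : SimpleGraph V) : Prop :=
  ∃! s : Set (Sym2 V), ∃ (v : V) (w : G.Walk v v), w.IsCycle ∧ s = {e | e ∈ w.edges}

lemma IsUnicyclic.not_isAcyclic (hG : G.IsUnicyclic) : ¬ G.IsAcyclic := by
  obtain ⟨_, ⟨_, w, hw, _⟩, _⟩ := hG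
  exact fun hA ↦ hA w hw

lemma IsAcyclic.of_forall_adj_mem {S : Set V} (hS : S.Subsingleton)
    (hcover : ∀ x y, G.Adj x y → x ∈ S ∨ y ∈ S) : G.IsAcyclic := by
  have mem_of_adj {x y : V} (hxy : G.Adj x y) (hx : x ∉ S) : y ∈ S :=
    (hcover x y hxy).resolve_left hx
  -- A vertex outside `S` would have both cycle-neighbours in `S`, i.e. equal; and every cycle
  -- has a vertex outside `S`, because adjacent vertices cannot both lie in `S`.
  have no_cycle_off {u : V} (hu : u ∉ S) (c : G.Walk u u) (hc : c.IsCycle) : False :=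
    hc.snd_ne_penultimate <| hS (mem_of_adj (c.adj_snd hc.not_nil) hu)
      (mem_of_adj (c.adj_penultimate hc.not_nil).symm hu)
  classical
  intro v c hc
  by_cases hv : v ∈ S
  · have hsnd : c.snd ∉ S := fun h ↦ (c.adj_snd hc.not_nil).ne (hS hv h)
    exact no_cycle_off hsnd _ (hc.rotate (c.getVert_mem_support 1))
  · exact no_cycle_off hv c hc

lemma Walk.IsCycle.edges_eq_edgeSet [Fintype G.edgeSet] {v : V} {c : G.Walk v v}
    (hc : c.IsCycle) (hE : G.edgeFinset.card ≤ 3) : {e | e ∈ c.edges} = G.edgeSet := by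
  classical
  have hsub : c.edges.toFinset ⊆ G.edgeFinset := fun e he ↦
    mem_edgeFinset.2 (c.edges_subset_edgeSet (List.mem_toFinset.1 he))
  have hcard : G.edgeFinset.card ≤ c.edges.toFinset.card := by
    rw [List.toFinset_card_of_nodup hc.edges_nodup, c.length_edges]
    exact hE.trans hc.three_le_length
  have := Finset.eq_of_subset_of_card_le hsub hcard
  ext e
  rw [Set.mem_ofPred_eq, ← List.mem_toFinset, this, mem_edgeFinset]

lemma isUnicyclic_of_card_edgeFinset_le_three [Fintype G.edgeSet] {v : V} {c : G.Walk v v}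
    (hc : c.IsCycle) (hE : G.edgeFinset.card ≤ 3) : G.IsUnicyclic := by
  refine ⟨_, ⟨v, c, hc, rfl⟩, ?_⟩
  rintro _ ⟨u, c', hc', rfl⟩
  rw [hc.edges_eq_edgeSet hE, hc'.edges_eq_edgeSet hE]

lemma isUnicyclic_top_of_card_eq_three [Fintype V] [DecidableEq V] (hV : Fintype.card V = 3) :
    (⊤ : SimpleGraph V).IsUnicyclic := by
  have hclique : (⊤ : SimpleGraph V).IsNClique 3 Finset.univ :=
    ⟨by simp, by rw [Finset.card_univ, hV]⟩
  obtain ⟨v, c, hc, -⟩ := is3Clique_iff_exists_cycle_length_three.1 ⟨_, hclique⟩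
  refine isUnicyclic_of_card_edgeFinset_le_three hc ?_
  rw [card_edgeFinset_top_eq_card_choose_two, hV]
  decide

lemma Walk.isCycle_triangle {a b c : V} (hab : G.Adj a b) (hbc : G.Adj b c) (hca : G.Adj c a) :
    (Walk.cons hab (.cons hbc (.cons hca .nil))).IsCycle := by
  simp [Walk.cons_isCycle_iff, hab.ne, hab.ne.symm, hbc.ne, hca.ne, hca.ne.symm]

lemma not_isUnicyclic_of_adj_of_adj {a b x y : V} (hab : G.Adj a b) (hax : G.Adj a x)
    (hbx : G.Adj b x) (hay : G.Adj a y) (hby : G.Adj b y) (hxy : x ≠ y) : ¬ G.IsUnicyclic := by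
  rintro ⟨s, -, huniq⟩
  have hsame := (huniq _ ⟨a, _, Walk.isCycle_triangle hab hbx hax.symm, rfl⟩).trans
    (huniq _ ⟨a, _, Walk.isCycle_triangle hab hby hay.symm, rfl⟩).symm
  have hmem := congrArg (s(x, a) ∈ ·) hsame
  simp [hxy, hbx.ne.symm, hax.ne.symm] at hmem

end SimpleGraph

open SimpleGraph

section GenNonCoprimeGraph

variable {G : Type*} [Group G] {H : Subgroup G}

lemma zpow_ne_zpow_of_natAbs_sub_lt_orderOf {g : G} {i j : ℤ} (hij : i ≠ j)
    (h : (i - j).natAbs < orderOf g) : g ^ i ≠ g ^ j := by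
  rw [Ne, zpow_eq_zpow_iff_modEq, Int.modEq_iff_dvd]
  intro hdvd
  have := Int.eq_zero_of_dvd_of_natAbs_lt_natAbs hdvd (by rwa [← Int.natAbs_neg, neg_sub])
  omega

lemma genNonCoprimeGraph_adj_mk_of_orderOf_dvd {a b : G} (ha : a ≠ 1) (hb : b ≠ 1) (hab : a ≠ b)
    (haH : a ∈ H) (hdvd : orderOf a ∣ orderOf b) :
    (genNonCoprimeGraph G H).Adj ⟨a, ha⟩ ⟨b, hb⟩ := by
  refine ⟨by simpa using hab, ?_, .inl haH⟩
  rw [Nat.gcd_eq_left hdvd, Ne, orderOf_eq_one_iff]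
  exact ha

lemma genNonCoprimeGraph_isAcyclic_of_card_le_two [Finite H] (hH : Nat.card H ≤ 2) :
    (genNonCoprimeGraph G H).IsAcyclic := by
  have hsub : ((H : Set G) \ {1}).Subsingleton := by
    rw [← Set.encard_le_one_iff_subsingleton, Set.encard_sdiff_singleton_of_mem H.one_mem,
      ← ENat.card_coe_set_eq, ENat.card_eq_coe_natCard, SetLike.coe_sort_coe]
    exact_mod_cast (by omega : Nat.card H - 1 ≤ 1)
  exact .of_forall_adj_mem ((hsub.preimage Subtype.val_injective).anti fun x hx ↦ ⟨hx, x.2⟩)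
    fun _ _ hxy ↦ hxy.2.2

lemma genNonCoprimeGraph_isAcyclic_of_card_le_three [Finite G] (hG : Nat.card G ≤ 3) :
    (genNonCoprimeGraph G H).IsAcyclic := by
  refine .of_card_le_two ?_
  rw [ENat.card_eq_coe_natCard]
  change ((({1} : Set G)ᶜ).ncard : ℕ∞) ≤ 2
  rw [Set.ncard_compl, Set.ncard_singleton]
  exact_mod_cast (by omega : Nat.card G - 1 ≤ 2)

lemma IsPGroup.genNonCoprimeGraph_top_eq_top {p : ℕ} [Fact p.Prime] (hG : IsPGroup p G) :
    genNonCoprimeGraph G ⊤ = ⊤ := by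
  have dvd_orderOf (a : {x : G // x ≠ 1}) : p ∣ orderOf (a : G) := by
    obtain ⟨k, hk⟩ := IsPGroup.iff_orderOf.1 hG a
    rw [hk]
    refine dvd_pow_self p fun hk0 ↦ a.2 ?_
    rwa [hk0, pow_zero, orderOf_eq_one_iff] at hk
  ext a b
  refine ⟨fun h ↦ h.1, fun hab ↦ ⟨hab, fun hgcd ↦ ?_, .inl trivial⟩⟩
  have := Nat.dvd_gcd (dvd_orderOf a) (dvd_orderOf b)
  rw [hgcd, Nat.dvd_one] at this
  exact (Fact.out : p.Prime).one_lt.ne' this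

lemma exists_mem_ne_inv_ne_of_orderOf_eq_card [Finite G] [IsCyclic G] {g : G}
    (hg : orderOf g = Nat.card G) (hG : 5 ≤ Nat.card G) (hH : 3 ≤ Nat.card H) :
    ∃ u ∈ H, u ≠ u⁻¹ ∧ u ≠ g ∧ u ≠ g⁻¹ := by
  by_cases hHtop : H = ⊤
  · subst hHtop
    have hne {i j : ℤ} (hij : i ≠ j) (h : (i - j).natAbs ≤ 4) : g ^ i ≠ g ^ j :=
      zpow_ne_zpow_of_natAbs_sub_lt_orderOf hij (by omega)
    refine ⟨g ^ (2 : ℤ), Subgroup.mem_top _, ?_, ?_, ?_⟩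
    · rw [← zpow_neg]
      exact hne (i := 2) (j := -2) (by decide) (by decide)
    · simpa using hne (i := 2) (j := 1) (by decide) (by decide)
    · simpa using hne (i := 2) (j := -1) (by decide) (by decide)
  · obtain ⟨⟨u, huH⟩, hu⟩ := IsCyclic.exists_ofOrder_eq_natCard (α := H)
    rw [Subgroup.orderOf_mk] at hu
    refine ⟨u, huH, ?_, ?_, ?_⟩
    · simpa using zpow_ne_zpow_of_natAbs_sub_lt_orderOf (g := u) (i := 1) (j := -1) (by decide)
        (by omega)
    · rintro rfl
      exact hHtop (Subgroup.eq_top_of_card_eq H (hu.symm.trans hg))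
    · rintro rfl
      exact hHtop (Subgroup.eq_top_of_card_eq H (hu.symm.trans (orderOf_inv g ▸ hg)))

lemma genNonCoprimeGraph_not_isUnicyclic_of_five_le_card [Finite G] (hG : IsCyclic G)
    (h5 : 5 ≤ Nat.card G) (hH : 3 ≤ Nat.card H) : ¬ (genNonCoprimeGraph G H).IsUnicyclic := by
  obtain ⟨g, hg⟩ := IsCyclic.exists_ofOrder_eq_natCard (α := G)
  obtain ⟨u, huH, huu, hug, hug'⟩ := exists_mem_ne_inv_ne_of_orderOf_eq_card hg h5 hH
  have hu : u ≠ 1 := fun h ↦ huu (by simp [h])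
  have hu' : u⁻¹ ≠ 1 := inv_ne_one.2 hu
  have hg1 : g ≠ 1 := by
    rintro rfl
    rw [orderOf_one] at hg
    omega
  have hg1' : g⁻¹ ≠ 1 := inv_ne_one.2 hg1
  have hgg : g ≠ g⁻¹ := by
    simpa using zpow_ne_zpow_of_natAbs_sub_lt_orderOf (g := g) (i := 1) (j := -1) (by decide)
      (by omega)
  have hdvd : orderOf u ∣ orderOf g := hg ▸ orderOf_dvd_natCard u
  refine not_isUnicyclic_of_adj_of_adj (a := ⟨u, hu⟩) (b := ⟨u⁻¹, hu'⟩) (x := ⟨g, hg1⟩)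
    (y := ⟨g⁻¹, hg1'⟩) ?_ ?_ ?_ ?_ ?_ (by simpa using hgg) <;>
    refine genNonCoprimeGraph_adj_mk_of_orderOf_dvd _ _ ?_ ?_ ?_ <;>
    simp_all [orderOf_inv, inv_eq_iff_eq_inv]

end GenNonCoprimeGraph

theorem unicyclic_iff_general {G : Type*} [Group G] [Fintype G]
    (hG : IsCyclic G)
    (H : Subgroup G) :
    (∃! s : Set (Sym2 {g : G // g ≠ 1}),
        ∃ (v : {g : G // g ≠ 1}) (w : (genNonCoprimeGraph G H).Walk v v),
          w.IsCycle ∧ s = {e | e ∈ w.edges}) ↔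
      (H = ⊤ ∧ Fintype.card G = 4) := by
  change (genNonCoprimeGraph G H).IsUnicyclic ↔ _
  rw [← Nat.card_eq_fintype_card]
  constructor
  · intro hU
    have hH : 3 ≤ Nat.card H := by
      by_contra! h
      exact hU.not_isAcyclic (genNonCoprimeGraph_isAcyclic_of_card_le_two (by omega))
    have h4 : 4 ≤ Nat.card G := by
      by_contra! h
      exact hU.not_isAcyclic (genNonCoprimeGraph_isAcyclic_of_card_le_three (by omega))
    have h5 : Nat.card G < 5 := by
      by_contra! h
      exact genNonCoprimeGraph_not_isUnicyclic_of_five_le_card hG h hH hU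
    have hHG : Nat.card H = Nat.card G := by
      have : Nat.card H ∣ 4 := (show Nat.card G = 4 by omega) ▸ Subgroup.card_subgroup_dvd_card H
      have := Nat.le_of_dvd (by norm_num) this
      interval_cases h : Nat.card H <;> omega
    exact ⟨Subgroup.eq_top_of_card_eq H hHG, by omega⟩
  · rintro ⟨rfl, h4⟩
    rw [(IsPGroup.of_card (p := 2) (n := 2) h4).genNonCoprimeGraph_top_eq_top]
    classical
    refine isUnicyclic_top_of_card_eq_three ?_
    rw [Fintype.card_subtype_compl, Fintype.card_subtype_eq, ← Nat.card_eq_fintype_card, h4]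

theorem unicyclic_iff {G : Type*} [Group G] [Fintype G]
    (hG : IsCyclic G) (hn : 3 ≤ Fintype.card G)
    (H : Subgroup G) (hH : H ≠ ⊥) :
    (∃! s : Set (Sym2 {g : G // g ≠ 1}),
        ∃ (v : {g : G // g ≠ 1}) (w : (genNonCoprimeGraph G H).Walk v v),
          w.IsCycle ∧ s = {e | e ∈ w.edges}) ↔
      (H = ⊤ ∧ Fintype.card G = 4) :=
  unicyclic_iff_general hG H
end
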